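/- arXiv:2304.03141 — 2 statements merged into one kernel-verified Lean document; each statement's English description precedes it below -/
import Mathlib

section
/- For any positions p and q and any effector e : Σ → Σ, a delete and an apply operation commute: deleteOp p ∘ applyOp q e = applyOp q e ∘ deleteOp p as functions on states s : P → Option Σ. In particular, when p = q the element ends up deleted in either order (the delete 'wins'). -/
/-- Delete the element at position `p`. -/
def deleteOp {P S : Type*} [DecidableEq P] (p : P) (s : P → Option S) : P → Option S :=
  Function.update s p none

/-- Apply effector `e` to the element at position `p` (no-op if absent). -/
def applyOp {P S : Type*} [DecidableEq P] (p : P) (e : S → S) (s : P → Option S) :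
    P → Option S :=
  Function.update s p (Option.map e (s p))

/-- A delete and an apply operation commute; in particular when `p = q`
the element ends up deleted in either order (Theorem A.1, delete/apply case). -/
theorem deleteOp_applyOp_comm {P S : Type*} [DecidableEq P] (p q : P) (e : S → S) :
    (deleteOp p) ∘ (applyOp q e) = (applyOp q e) ∘ (deleteOp p) := by
  funext s x
  simp only [Function.comp_apply, deleteOp, applyOp, Function.update]
  by_cases hxp : x = p <;> by_cases hxq : x = q <;> by_cases hpq : p = q <;>
    simp_all
end

section
/- For any for-each instruction f : P → Σ → Option Σ, any position p, any σ : Σ, and any state s : P → Option Σ: applying the for-each after an insert at p equals first applying the for-each and then inserting the transformed element, i.e., forEachOp f (insertOp p σ s) = (match f p σ with | some σ' => insertOp p σ' (forEachOp f s) | none => deleteOp p (forEachOp f s)). In words, executing a buffered for-each operation on a concurrently inserted element (as Algorithm 2's insert effector does) restores commutativity between for-each and insert. -/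
/-- Insert an element with initial value `σ` at position `p`. -/
def insertOp {P S : Type*} [DecidableEq P] (p : P) (σ : S) (s : P → Option S) :
    P → Option S :=
  Function.update s p (some σ)

/-- Execute a for-each instruction `f` on every present element. -/
def forEachOp {P S : Type*} (f : P → S → Option S) (s : P → Option S) : P → Option S :=
  fun q => (s q).bind (f q)

/-- Executing a buffered for-each operation on a concurrently inserted element (as
Algorithm 2's insert effector does) restores commutativity between for-each and
insert (key case of Theorem A.2). -/
theorem forEachOp_insertOp {P S : Type*} [DecidableEq P]
    (f : P → S → Option S) (p : P) (σ : S) (s : P → Option S) :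
    forEachOp f (insertOp p σ s) =
      (match f p σ with
        | some σ' => insertOp p σ' (forEachOp f s)
        | none => deleteOp p (forEachOp f s)) := by
  funext q
  rcases h : f p σ with _ | σ' <;>
  · simp only [forEachOp, insertOp, deleteOp, Function.update]
    by_cases hq : q = p <;> simp [hq, h]
end
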